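/- Let α > 0, β > 0, k₀ = (β/(48α))^{1/4}, ε > 0 and 0 < μ < 1/30. For t > 0 set τ = 12αt and, for ζ ∈ ℂ, S(t,ζ) = Σ_{n=4}^∞ (−1)^{n+1} (β/(48α k₀^{n+1})) τ^{1−n/3} ζⁿ. Then there exist t₀ > 0 and C > 0, depending only on α, β, ε, μ, such that for all t ≥ t₀ and all ζ ∈ ℂ with |ζ| ≤ ε τ^{μ}, the series defining S(t,ζ) converges absolutely and |S(t,ζ)| ≤ C t^{−1/3 + 4μ}. -/

import Mathlib

/-- `k₀ = (β/(48α))^{1/4}`. -/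
noncomputable def k0def (α β : ℝ) : ℝ := (β / (48 * α)) ^ ((1 : ℝ) / 4)

/-- The `n`-th term of the rescaled Taylor tail
`S(t,ζ) = Σ_{n≥4} (−1)^{n+1} (β/(48α k₀^{n+1})) τ^{1−n/3} ζⁿ`, `τ = 12αt`. -/
noncomputable def Sterm (α β t : ℝ) (ζ : ℂ) (n : ℕ) : ℂ :=
  (((-1 : ℝ) ^ (n + 1) * (β / (48 * α * (k0def α β) ^ (n + 1)))
      * (12 * α * t) ^ ((1 : ℝ) - (n : ℝ) / 3) : ℝ) : ℂ) * ζ ^ n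

/-- Uniform decay of the phase remainder `S(t,ζ)` for `|ζ| ≤ ε τ^μ`, `0 < μ < 1/30`. -/
theorem stmt17 (α β ε μ : ℝ) (hα : 0 < α) (hβ : 0 < β) (hε : 0 < ε)
    (hμ1 : 0 < μ) (hμ2 : μ < 1 / 30) :
    ∃ t₀ : ℝ, 0 < t₀ ∧ ∃ C : ℝ, 0 < C ∧
      ∀ t : ℝ, t₀ ≤ t → ∀ ζ : ℂ, ‖ζ‖ ≤ ε * (12 * α * t) ^ μ →
        (Summable fun n : ℕ => ‖Sterm α β t ζ (n + 4)‖) ∧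
        ‖∑' n : ℕ, Sterm α β t ζ (n + 4)‖ ≤ C * t ^ (-(1 : ℝ) / 3 + 4 * μ) := by
  have hk0 : 0 < k0def α β := Real.rpow_pos_of_pos (by positivity) _
  set k₀ := k0def α β with hkdef
  set e : ℝ := -(1 : ℝ) / 3 + 4 * μ with hedef
  set c : ℝ := 1 / 3 - μ with hcdef
  have hc : 0 < c := by rw [hcdef]; linarith
  set T : ℝ := max 1 ((2 * ε / k₀) ^ (1 / c)) with hTdef
  have hT1 : (1 : ℝ) ≤ T := le_max_left _ _
  have hT0 : (0 : ℝ) < T := lt_of_lt_of_le one_pos hT1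
  set K : ℝ := β * ε ^ 4 / (48 * α * k₀ ^ 5) with hKdef
  have hK0 : 0 < K := by positivity
  refine ⟨T / (12 * α), by positivity, 2 * K * (12 * α) ^ e, by positivity, ?_⟩
  intro t ht ζ hζ
  have ht0 : 0 < t := lt_of_lt_of_le (by positivity) ht
  set τ : ℝ := 12 * α * t with hτdef
  have hτ0 : 0 < τ := by positivity
  have hτT : T ≤ τ := by
    have := (div_le_iff₀ (by positivity : (0:ℝ) < 12 * α)).mp ht
    calc T ≤ t * (12 * α) := this
    _ = τ := by rw [hτdef]; ring
  -- the geometric ratio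
  set r : ℝ := (ε / k₀) * τ ^ (-c) with hrdef
  have hr0 : 0 ≤ r := by positivity
  have h2εk : 2 * ε / k₀ ≤ τ ^ c := by
    have h1 : 2 * ε / k₀ = ((2 * ε / k₀) ^ (1 / c)) ^ c := by
      rw [← Real.rpow_mul (by positivity), one_div_mul_cancel hc.ne', Real.rpow_one]
    rw [h1]
    have h2 : ((2 * ε / k₀) ^ (1 / c)) ^ c ≤ T ^ c :=
      Real.rpow_le_rpow (by positivity) (le_max_right _ _) hc.le
    exact h2.trans (Real.rpow_le_rpow (by positivity) hτT hc.le)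
  have hr : r ≤ 1 / 2 := by
    have hτc : 0 < τ ^ c := Real.rpow_pos_of_pos hτ0 _
    have h2 : (2 * ε / k₀) > 0 := by positivity
    rw [hrdef, Real.rpow_neg hτ0.le]
    have hinv : (τ ^ c)⁻¹ ≤ (2 * ε / k₀)⁻¹ := by
      apply inv_anti₀ h2 h2εk
    calc (ε / k₀) * (τ ^ c)⁻¹ ≤ (ε / k₀) * (2 * ε / k₀)⁻¹ := by
          apply mul_le_mul_of_nonneg_left hinv (by positivity)
      _ = 1 / 2 := by field_simp
  have hrlt : r < 1 := lt_of_le_of_lt hr (by norm_num)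
  -- exact value of term after bounding ‖ζ‖
  have key : ∀ n : ℕ,
      β / (48 * α * k₀ ^ (n + 5)) * τ ^ ((1 : ℝ) - ((n : ℝ) + 4) / 3) * (ε * τ ^ μ) ^ (n + 4)
        = (K * τ ^ e) * r ^ n := by
    intro n
    have h1 : (ε * τ ^ μ) ^ (n + 4) = ε ^ (n + 4) * τ ^ (μ * ((n : ℝ) + 4)) := by
      rw [mul_pow, ← Real.rpow_natCast (τ ^ μ) (n + 4), ← Real.rpow_mul hτ0.le]
      push_cast; ring_nf
    have h2 : r ^ n = (ε / k₀) ^ n * τ ^ ((-c) * (n : ℝ)) := by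
      rw [hrdef, mul_pow, ← Real.rpow_natCast (τ ^ (-c)) n, ← Real.rpow_mul hτ0.le]
    rw [h1, h2]
    have h3 : τ ^ ((1 : ℝ) - ((n : ℝ) + 4) / 3) * τ ^ (μ * ((n : ℝ) + 4))
        = τ ^ e * τ ^ ((-c) * (n : ℝ)) := by
      rw [← Real.rpow_add hτ0, ← Real.rpow_add hτ0]
      congr 1
      rw [hedef, hcdef]; ring
    calc β / (48 * α * k₀ ^ (n + 5)) * τ ^ ((1 : ℝ) - ((n : ℝ) + 4) / 3)
          * (ε ^ (n + 4) * τ ^ (μ * ((n : ℝ) + 4)))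
        = (β / (48 * α * k₀ ^ (n + 5)) * ε ^ (n + 4))
            * (τ ^ ((1 : ℝ) - ((n : ℝ) + 4) / 3) * τ ^ (μ * ((n : ℝ) + 4))) := by ring
      _ = (K * (ε / k₀) ^ n) * (τ ^ e * τ ^ ((-c) * (n : ℝ))) := by
          rw [h3]
          congr 1
          rw [hKdef, pow_add k₀ n 5, pow_add ε n 4, div_pow]
          field_simp
      _ = (K * τ ^ e) * ((ε / k₀) ^ n * τ ^ ((-c) * (n : ℝ))) := by ring
  -- norm of a term
  have hnorm : ∀ n : ℕ, ‖Sterm α β t ζ (n + 4)‖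
      = β / (48 * α * k₀ ^ (n + 5)) * τ ^ ((1 : ℝ) - ((n : ℝ) + 4) / 3) * ‖ζ‖ ^ (n + 4) := by
    intro n
    rw [Sterm, norm_mul, Complex.norm_real, norm_pow, Real.norm_eq_abs]
    congr 1
    have ha : (0 : ℝ) < β / (48 * α * k₀ ^ (n + 4 + 1)) := by positivity
    have hb : (0 : ℝ) < (12 * α * t) ^ ((1 : ℝ) - ((n + 4 : ℕ) : ℝ) / 3) :=
      Real.rpow_pos_of_pos (by positivity) _
    rw [abs_mul, abs_mul, abs_pow, abs_neg, abs_one, one_pow, one_mul,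
      abs_of_pos ha, abs_of_pos hb]
    have : ((n + 4 : ℕ) : ℝ) = (n : ℝ) + 4 := by push_cast; ring
    rw [this]
  have hbound : ∀ n : ℕ, ‖Sterm α β t ζ (n + 4)‖ ≤ (K * τ ^ e) * r ^ n := by
    intro n
    rw [hnorm n, ← key n]
    gcongr <;> first | positivity | exact norm_nonneg _ | exact hζ
  have hgeo : Summable (fun n : ℕ => (K * τ ^ e) * r ^ n) :=
    (summable_geometric_of_lt_one hr0 hrlt).mul_left _
  have hsum : Summable fun n : ℕ => ‖Sterm α β t ζ (n + 4)‖ :=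
    Summable.of_nonneg_of_le (fun n => norm_nonneg _) hbound hgeo
  refine ⟨hsum, ?_⟩
  have h4 : ‖∑' n : ℕ, Sterm α β t ζ (n + 4)‖ ≤ ∑' n : ℕ, ‖Sterm α β t ζ (n + 4)‖ :=
    norm_tsum_le_tsum_norm hsum
  have h5 : ∑' n : ℕ, ‖Sterm α β t ζ (n + 4)‖ ≤ ∑' n : ℕ, (K * τ ^ e) * r ^ n :=
    Summable.tsum_le_tsum hbound hsum hgeo
  have h6 : ∑' n : ℕ, (K * τ ^ e) * r ^ n = (K * τ ^ e) * (1 - r)⁻¹ := by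
    rw [tsum_mul_left, tsum_geometric_of_lt_one hr0 hrlt]
  have h7 : (K * τ ^ e) * (1 - r)⁻¹ ≤ (K * τ ^ e) * 2 := by
    apply mul_le_mul_of_nonneg_left _ (by positivity)
    have : (1 : ℝ) / 2 ≤ 1 - r := by linarith
    calc (1 - r)⁻¹ ≤ ((1 : ℝ) / 2)⁻¹ := inv_anti₀ (by norm_num) this
      _ = 2 := by norm_num
  have h8 : (K * τ ^ e) * 2 = 2 * K * (12 * α) ^ e * t ^ e := by
    rw [hτdef, Real.mul_rpow (by positivity) ht0.le]
    ring
  calc ‖∑' n : ℕ, Sterm α β t ζ (n + 4)‖ ≤ (K * τ ^ e) * (1 - r)⁻¹ := by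
        rw [← h6]; exact h4.trans h5
    _ ≤ (K * τ ^ e) * 2 := h7
    _ = 2 * K * (12 * α) ^ e * t ^ e := h8
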